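/- Expectation value of S₃ in a general coherent state: for every n : ℕ, every normalized fiducial vector Ψ₀ and all Euler angles Ω = (φ, θ, ψ), ⟨ R(Ω)Ψ₀ , S₃ · (R(Ω)Ψ₀) ⟩ = A₀ cos θ − A₁(ψ) sin θ, where ⟨·,·⟩ is the standard Hermitian inner product on ℂ^{n+1} (conjugate-linear in the first argument). -/

import Mathlib

open Matrix Complex

/-- Spin operator `S₃` for `2s = n`: diagonal with entries `j - n/2`. -/
noncomputable def S3 (n : ℕ) : Matrix (Fin (n+1)) (Fin (n+1)) ℂ :=
  Matrix.diagonal fun j => (j : ℂ) - (n : ℂ) / 2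

/-- Raising operator `S₊`: `(S₊)_{k+1,k} = √((k+1)(n-k))`. -/
noncomputable def Sp (n : ℕ) : Matrix (Fin (n+1)) (Fin (n+1)) ℂ :=
  Matrix.of fun j k =>
    if (j : ℕ) = (k : ℕ) + 1 then (Real.sqrt (((k : ℕ) + 1) * (n - (k : ℕ))) : ℂ) else 0

/-- Lowering operator `S₋ = S₊ᴴ`. -/
noncomputable def Sm (n : ℕ) : Matrix (Fin (n+1)) (Fin (n+1)) ℂ := (Sp n)ᴴ

/-- `S₂ = (S₊ - S₋)/(2i)`. -/
noncomputable def S2 (n : ℕ) : Matrix (Fin (n+1)) (Fin (n+1)) ℂ :=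
  (2 * Complex.I)⁻¹ • (Sp n - Sm n)

attribute [local instance] Matrix.normedAddCommGroup Matrix.normedSpace

/-- Rotation matrix `R(φ,θ,ψ) = exp(-iφS₃)·exp(-iθS₂)·exp(-iψS₃)`. -/
noncomputable def Rot (n : ℕ) (φ θ ψ : ℝ) : Matrix (Fin (n+1)) (Fin (n+1)) ℂ :=
  NormedSpace.exp ((-Complex.I * (φ : ℂ)) • S3 n) *
    NormedSpace.exp ((-Complex.I * (θ : ℂ)) • S2 n) *
      NormedSpace.exp ((-Complex.I * (ψ : ℂ)) • S3 n)


/-- `f_j = √(j(n-j+1))`. -/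
noncomputable def fc (n j : ℕ) : ℝ := Real.sqrt (j * (n - j + 1))

/-- `A₀ = Σ_j (j - n/2)|c_j|²`. -/
noncomputable def A0 (n : ℕ) (c : ℕ → ℂ) : ℝ :=
  ∑ j ∈ Finset.range (n+1), ((j : ℝ) - (n : ℝ) / 2) * ‖c j‖ ^ 2

/-- `A₁(ψ) = ½ Σ_{j=1}^n f_j (conj(c_j)c_{j-1}e^{iψ} + c_j conj(c_{j-1})e^{-iψ})`. -/
noncomputable def A1 (n : ℕ) (c : ℕ → ℂ) (ψ : ℝ) : ℂ :=
  (1 / 2 : ℂ) * ∑ j ∈ Finset.Icc 1 n, (fc n j : ℂ) *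
    ((starRingEnd ℂ) (c j) * c (j - 1) * Complex.exp (Complex.I * (ψ : ℂ)) +
      c j * (starRingEnd ℂ) (c (j - 1)) * Complex.exp (-(Complex.I * (ψ : ℂ))))

/-!
Conjugation by the diagonal unitary `exp(-iφS₃)` fixes `S₃`, so only `θ` and `ψ` matter.
With `A = iS₂ = (S₊ - S₋)/2` and `S₁ = (S₊ + S₋)/2`, the relations `[S₃, S₊] = S₊`,
`[S₃, S₋] = -S₋`, `[S₊, S₋] = 2S₃` give `[A, S₃] = -S₁` and `[A, S₁] = S₃`; hence
`exp(-tA)(cos t S₃ - sin t S₁)exp(tA)` has zero derivative, i.e.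
`exp(θA) S₃ exp(-θA) = cos θ S₃ - sin θ S₁`. Conjugating by the diagonal `exp(iψS₃)` turns `S₁`
into `(e^{iψ}S₊ + e^{-iψ}S₋)/2`. Finally `⟨Ψ₀, S₃Ψ₀⟩ = A₀`, and `⟨Ψ₀, S₋Ψ₀⟩` is the conjugate
of `⟨Ψ₀, S₊Ψ₀⟩ = Σ_j f_j conj(c_j) c_{j-1}`; these assemble into `A₁(ψ)`.
-/

open NormedSpace

section ExpConjugation

variable {𝔸 : Type*} [NormedRing 𝔸] [NormedAlgebra ℝ 𝔸] [CompleteSpace 𝔸]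

theorem exp_smul_mul_exp_neg_smul (A : 𝔸) (t : ℝ) : exp (t • A) * exp ((-t) • A) = 1 := by
  let _ := NormedAlgebra.restrictScalars ℚ ℝ 𝔸
  rw [← exp_add_of_commute (((Commute.refl A).smul_left t).smul_right (-t)), ← add_smul,
    add_neg_cancel, zero_smul, NormedSpace.exp_zero]

theorem exp_smul_mul_mul_exp_neg_smul_of_lie {A X Y : 𝔸} (hX : ⁅A, X⁆ = -Y) (hY : ⁅A, Y⁆ = X)
    (t : ℝ) : exp (t • A) * X * exp ((-t) • A) = Real.cos t • X - Real.sin t • Y := by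
  rw [Ring.lie_def] at hX hY
  set g : ℝ → 𝔸 := fun u => exp ((-u) • A) * (Real.cos u • X - Real.sin u • Y) * exp (u • A)
  have hg : ∀ u, HasDerivAt g 0 u := by
    intro u
    have hE : HasDerivAt (fun u : ℝ => exp ((-u) • A)) ((-A) * exp ((-u) • A)) u := by
      simpa only [neg_smul, smul_neg] using hasDerivAt_exp_smul_const' (-A) u
    have hM : HasDerivAt (fun u : ℝ => Real.cos u • X - Real.sin u • Y)
        ((-Real.sin u) • X - Real.cos u • Y) u :=
      ((Real.hasDerivAt_cos u).smul_const X).sub ((Real.hasDerivAt_sin u).smul_const Y)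
    refine ((hE.mul hM).mul (hasDerivAt_exp_smul_const' A u)).congr_deriv ?_
    have hAE : A * exp ((-u) • A) = exp ((-u) • A) * A :=
      ((Commute.refl A).smul_right (-u)).exp_right.eq
    have hXY : (-Real.sin u) • X - Real.cos u • Y =
        A * (Real.cos u • X - Real.sin u • Y) - (Real.cos u • X - Real.sin u • Y) * A := by
      simp only [mul_sub, sub_mul, mul_smul_comm, smul_mul_assoc]
      linear_combination (norm := module) (-Real.cos u) • hX + Real.sin u • hY
    rw [Pi.mul_apply, hXY, neg_mul, hAE]
    generalize Real.cos u • X - Real.sin u • Y = M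
    noncomm_ring
  have hconst : g t = X := by
    rw [is_const_of_deriv_eq_zero (fun u => (hg u).differentiableAt) (fun u => (hg u).deriv) t 0]
    simp [g]
  calc exp (t • A) * X * exp ((-t) • A)
      = exp (t • A) * g t * exp ((-t) • A) := by rw [hconst]
    _ = (exp (t • A) * exp ((-t) • A)) * (Real.cos t • X - Real.sin t • Y) *
          (exp (t • A) * exp ((-t) • A)) := by simp only [g]; noncomm_ring
    _ = Real.cos t • X - Real.sin t • Y := by rw [exp_smul_mul_exp_neg_smul, one_mul, mul_one]

end ExpConjugation

lemma conjTranspose_exp_smul_of_isHermitian {m : Type*} [Fintype m] [DecidableEq m]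
    {H : Matrix m m ℂ} (hH : H.IsHermitian) (z : ℂ) : (exp (z • H))ᴴ = exp (star z • H) := by
  rw [← exp_conjTranspose, conjTranspose_smul, hH.eq]

lemma star_dotProduct_conjTranspose_mulVec {m R : Type*} [Fintype m] [CommSemiring R] [StarRing R]
    (A : Matrix m m R) (v : m → R) : star v ⬝ᵥ (Aᴴ *ᵥ v) = star (star v ⬝ᵥ (A *ᵥ v)) := by
  rw [star_dotProduct, star_mulVec, conjTranspose_conjTranspose, dotProduct_mulVec]

noncomputable def S1 (n : ℕ) : Matrix (Fin (n + 1)) (Fin (n + 1)) ℂ :=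
  (2 : ℂ)⁻¹ • (Sp n + Sm n)

section Spin

variable (n : ℕ)

lemma fc_zero : fc n 0 = 0 := by simp [fc]

lemma fc_add_one_self : fc n (n + 1) = 0 := by simp [fc]

lemma sq_fc {j : ℕ} (hj : j ≤ n + 1) : fc n j ^ 2 = j * (n - j + 1) := by
  have : (j : ℝ) ≤ n + 1 := by exact_mod_cast hj
  exact Real.sq_sqrt (by nlinarith)

lemma Sp_apply (j k : Fin (n + 1)) :
    Sp n j k = if (j : ℕ) = k + 1 then (fc n j : ℂ) else 0 := by
  simp only [Sp, fc, of_apply]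
  split_ifs with h
  · rw [h]; push_cast; ring_nf
  · rfl

lemma Sm_apply (j k : Fin (n + 1)) :
    Sm n j k = if (k : ℕ) = j + 1 then (fc n k : ℂ) else 0 := by
  rw [Sm, conjTranspose_apply, Sp_apply]
  split_ifs <;> simp

-- `fc n 0 = 0` and `fc n (n + 1) = 0` absorb the out-of-range indices `0 - 1` and `n + 1`.
lemma Sp_mulVec (c : ℕ → ℂ) (j : Fin (n + 1)) :
    (Sp n *ᵥ fun k : Fin (n + 1) => c k) j = fc n j * c (j - 1) := by
  simp only [mulVec, dotProduct, Sp_apply, ite_mul, zero_mul]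
  rw [Fin.sum_univ_eq_sum_range (fun k => if (j : ℕ) = k + 1 then (fc n j : ℂ) * c k else 0)]
  rcases Nat.eq_zero_or_eq_succ_pred (j : ℕ) with hj | hj
  · simp [hj, fc_zero]
  · rw [hj]
    simp only [Nat.succ_eq_add_one, Nat.add_right_cancel_iff, Nat.add_sub_cancel]
    rw [Finset.sum_ite_eq, if_pos (Finset.mem_range.2 (by omega))]

lemma Sm_mulVec (c : ℕ → ℂ) (j : Fin (n + 1)) :
    (Sm n *ᵥ fun k : Fin (n + 1) => c k) j = fc n (j + 1) * c (j + 1) := by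
  simp only [mulVec, dotProduct, Sm_apply, ite_mul, zero_mul]
  rw [Fin.sum_univ_eq_sum_range (fun k => if k = (j : ℕ) + 1 then (fc n k : ℂ) * c k else 0),
    Finset.sum_ite_eq']
  split_ifs with h
  · rfl
  · have hj : (j : ℕ) = n := by simp at h; omega
    simp [hj, fc_add_one_self]

lemma S3_mulVec (c : ℕ → ℂ) (j : Fin (n + 1)) :
    (S3 n *ᵥ fun k : Fin (n + 1) => c k) j = ((j : ℂ) - n / 2) * c j := by
  simp [S3, mulVec_diagonal]

lemma S3_isHermitian : (S3 n).IsHermitian := by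
  rw [S3, isHermitian_diagonal_iff]
  intro j
  simp [IsSelfAdjoint]

lemma S2_isHermitian : (S2 n).IsHermitian := by
  have h : star ((2 * I)⁻¹) = -(2 * I)⁻¹ := by simp
  rw [IsHermitian, S2, conjTranspose_smul, conjTranspose_sub, Sm, conjTranspose_conjTranspose, h,
    neg_smul, ← smul_neg, neg_sub]

lemma lie_S3_Sp : ⁅S3 n, Sp n⁆ = Sp n := by
  ext j k
  simp only [Ring.lie_def, S3, Matrix.sub_apply, diagonal_mul, mul_diagonal, Sp_apply]
  split_ifs with h
  · have : ((j : ℕ) : ℂ) = (k : ℕ) + 1 := by exact_mod_cast h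
    rw [this]; ring
  · simp

lemma lie_S3_Sm : ⁅S3 n, Sm n⁆ = -Sm n := by
  have h := congrArg conjTranspose (lie_S3_Sp n)
  rw [Ring.lie_def, conjTranspose_sub, conjTranspose_mul, conjTranspose_mul,
    (S3_isHermitian n).eq] at h
  rw [Ring.lie_def, Sm]
  linear_combination (norm := abel) -h

lemma lie_Sp_Sm : ⁅Sp n, Sm n⁆ = (2 : ℂ) • S3 n := by
  rw [Ring.lie_def, ext_iff_mulVec]
  intro v
  obtain ⟨c, rfl⟩ : ∃ c : ℕ → ℂ, v = fun k : Fin (n + 1) => c k :=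
    ⟨fun m => v (Fin.ofNat (n + 1) m), by simp⟩
  have hSp := funext (Sp_mulVec n c)
  have hSm := funext (Sm_mulVec n c)
  funext j
  rw [sub_mulVec, ← mulVec_mulVec, ← mulVec_mulVec, hSp, hSm, Pi.sub_apply,
    Sp_mulVec n (fun m => fc n (m + 1) * c (m + 1)), Sm_mulVec n (fun m => fc n m * c (m - 1)),
    smul_mulVec, Pi.smul_apply, S3_mulVec, smul_eq_mul]
  have hlow : (fc n j : ℂ) * (fc n (j - 1 + 1) * c (j - 1 + 1)) = (fc n j ^ 2 : ℝ) * c j := by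
    rcases Nat.eq_zero_or_pos (j : ℕ) with h | h
    · simp [h, fc_zero]
    · rw [Nat.sub_add_cancel h]; push_cast; ring
  have hup : (fc n (j + 1) : ℂ) * (fc n (j + 1) * c (j + 1 - 1)) =
      (fc n (j + 1) ^ 2 : ℝ) * c j := by
    simp only [Nat.add_sub_cancel]; push_cast; ring
  rw [hlow, hup, sq_fc n (by omega), sq_fc n (by omega)]
  push_cast
  ring

lemma I_smul_S2 : I • S2 n = (2 : ℂ)⁻¹ • (Sp n - Sm n) := by
  rw [S2, smul_smul, mul_inv, ← mul_assoc, mul_comm I, mul_assoc, mul_inv_cancel₀ I_ne_zero,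
    mul_one]

lemma lie_I_smul_S2_S3 : ⁅I • S2 n, S3 n⁆ = -S1 n := by
  have hp := lie_S3_Sp n
  have hm := lie_S3_Sm n
  rw [Ring.lie_def] at hp hm ⊢
  rw [I_smul_S2, S1]
  simp only [smul_mul_assoc, mul_smul_comm, sub_mul, mul_sub]
  linear_combination (norm := module) (-(2 : ℂ)⁻¹) • hp + (2 : ℂ)⁻¹ • hm

lemma lie_I_smul_S2_S1 : ⁅I • S2 n, S1 n⁆ = S3 n := by
  have h := lie_Sp_Sm n
  rw [Ring.lie_def] at h ⊢
  rw [I_smul_S2, S1]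
  simp only [smul_mul_assoc, mul_smul_comm, sub_mul, mul_sub, add_mul, mul_add]
  linear_combination (norm := module) (2 : ℂ)⁻¹ • h

section OperatorNorm

-- `exp` depends only on the topology; the entrywise sup norm chosen for `Rot` is not
-- submultiplicative, so the derivative argument runs with the `ℓ∞` operator norm instead.
attribute [-instance] Matrix.normedAddCommGroup Matrix.normedSpace
attribute [local instance] Matrix.linftyOpNormedRing Matrix.linftyOpNormedAlgebra

lemma exp_smul_S2_conj_S3 (θ : ℝ) :
    exp ((I * θ) • S2 n) * S3 n * exp ((-I * θ) • S2 n) =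
      Real.cos θ • S3 n - Real.sin θ • S1 n := by
  have hθ : (I * θ) • S2 n = θ • (I • S2 n) := by rw [mul_comm, mul_smul, Complex.coe_smul]
  have hθ' : (-I * θ) • S2 n = (-θ) • (I • S2 n) := by
    rw [neg_mul, mul_comm, ← neg_mul, mul_smul, ← Complex.ofReal_neg, Complex.coe_smul]
  rw [hθ, hθ']
  exact exp_smul_mul_mul_exp_neg_smul_of_lie (lie_I_smul_S2_S3 n) (lie_I_smul_S2_S1 n) θ

end OperatorNorm

lemma exp_smul_S3 (z : ℂ) :
    exp (z • S3 n) = diagonal fun j : Fin (n + 1) => Complex.exp (z * ((j : ℕ) - n / 2)) := by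
  rw [S3, ← diagonal_smul, exp_diagonal]
  congr 1
  funext j
  simp [← Complex.exp_eq_exp_ℂ]

lemma exp_smul_S3_mul_mul_exp_neg_smul_S3_apply (z : ℂ)
    (X : Matrix (Fin (n + 1)) (Fin (n + 1)) ℂ) (j k : Fin (n + 1)) :
    (exp (z • S3 n) * X * exp ((-z) • S3 n)) j k =
      Complex.exp (z * ((j : ℕ) - (k : ℕ))) * X j k := by
  rw [exp_smul_S3, exp_smul_S3, mul_diagonal, diagonal_mul, mul_comm _ (X j k), mul_assoc,
    ← Complex.exp_add, mul_comm]
  ring_nf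

lemma exp_smul_S3_conj_S3 (z : ℂ) : exp (z • S3 n) * S3 n * exp ((-z) • S3 n) = S3 n := by
  ext j k
  rw [exp_smul_S3_mul_mul_exp_neg_smul_S3_apply, S3, diagonal_apply]
  split_ifs with h <;> simp [h]

lemma exp_smul_S3_conj_Sp (z : ℂ) :
    exp (z • S3 n) * Sp n * exp ((-z) • S3 n) = Complex.exp z • Sp n := by
  ext j k
  rw [exp_smul_S3_mul_mul_exp_neg_smul_S3_apply, Matrix.smul_apply, Sp_apply, smul_eq_mul]
  split_ifs with h
  · have : ((j : ℕ) : ℂ) = (k : ℕ) + 1 := by exact_mod_cast h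
    rw [this, add_sub_cancel_left, mul_one]
  · simp

lemma exp_smul_S3_conj_Sm (z : ℂ) :
    exp (z • S3 n) * Sm n * exp ((-z) • S3 n) = Complex.exp (-z) • Sm n := by
  ext j k
  rw [exp_smul_S3_mul_mul_exp_neg_smul_S3_apply, Matrix.smul_apply, Sm_apply, smul_eq_mul]
  split_ifs with h
  · have : ((k : ℕ) : ℂ) = (j : ℕ) + 1 := by exact_mod_cast h
    rw [this]; ring_nf
  · simp

lemma exp_smul_S3_conj_S1 (z : ℂ) :
    exp (z • S3 n) * S1 n * exp ((-z) • S3 n) =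
      (2 : ℂ)⁻¹ • (Complex.exp z • Sp n + Complex.exp (-z) • Sm n) := by
  rw [S1, mul_smul_comm, smul_mul_assoc, mul_add, add_mul, exp_smul_S3_conj_Sp,
    exp_smul_S3_conj_Sm]

lemma conjTranspose_Rot (φ θ ψ : ℝ) :
    (Rot n φ θ ψ)ᴴ = exp ((I * ψ) • S3 n) * exp ((I * θ) • S2 n) * exp ((I * φ) • S3 n) := by
  have hstar : ∀ a : ℝ, star (-I * a) = I * a := fun a => by simp
  rw [Rot, conjTranspose_mul, conjTranspose_mul,
    conjTranspose_exp_smul_of_isHermitian (S3_isHermitian n),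
    conjTranspose_exp_smul_of_isHermitian (S3_isHermitian n),
    conjTranspose_exp_smul_of_isHermitian (S2_isHermitian n), hstar, hstar, hstar, mul_assoc]

lemma conjTranspose_Rot_mul_S3_mul_Rot (φ θ ψ : ℝ) :
    (Rot n φ θ ψ)ᴴ * (S3 n * Rot n φ θ ψ) =
      Real.cos θ • S3 n - Real.sin θ •
        (2 : ℂ)⁻¹ • (Complex.exp (I * ψ) • Sp n + Complex.exp (-(I * ψ)) • Sm n) := by
  have hφ : exp ((I * φ) • S3 n) * S3 n * exp ((-I * φ) • S3 n) = S3 n := by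
    rw [neg_mul, exp_smul_S3_conj_S3]
  calc (Rot n φ θ ψ)ᴴ * (S3 n * Rot n φ θ ψ)
      = exp ((I * ψ) • S3 n) *
          (exp ((I * θ) • S2 n) * (exp ((I * φ) • S3 n) * S3 n * exp ((-I * φ) • S3 n)) *
            exp ((-I * θ) • S2 n)) * exp ((-(I * ψ)) • S3 n) := by
        rw [conjTranspose_Rot, Rot, neg_mul I ψ]; noncomm_ring
    _ = exp ((I * ψ) • S3 n) * (Real.cos θ • S3 n - Real.sin θ • S1 n) *
          exp ((-(I * ψ)) • S3 n) := by rw [hφ, exp_smul_S2_conj_S3]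
    _ = _ := by
      rw [mul_sub, sub_mul, mul_smul_comm, mul_smul_comm, smul_mul_assoc, smul_mul_assoc,
        exp_smul_S3_conj_S3, exp_smul_S3_conj_S1]

lemma star_dotProduct_S3_mulVec (c : ℕ → ℂ) :
    star (fun j : Fin (n + 1) => c j) ⬝ᵥ (S3 n *ᵥ fun j : Fin (n + 1) => c j) = A0 n c := by
  rw [A0, Complex.ofReal_sum, ← Fin.sum_univ_eq_sum_range]
  refine Finset.sum_congr rfl fun j _ => ?_
  rw [Pi.star_apply, S3_mulVec, RCLike.star_def]
  push_cast
  rw [← Complex.ofReal_pow, Complex.sq_norm, Complex.normSq_eq_conj_mul_self]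
  ring

lemma star_dotProduct_Sp_mulVec (c : ℕ → ℂ) :
    star (fun j : Fin (n + 1) => c j) ⬝ᵥ (Sp n *ᵥ fun j : Fin (n + 1) => c j) =
      ∑ j ∈ Finset.Icc 1 n, (fc n j : ℂ) * (starRingEnd ℂ (c j) * c (j - 1)) := by
  simp only [dotProduct, Pi.star_apply, Sp_mulVec, RCLike.star_def]
  rw [Fin.sum_univ_eq_sum_range (fun j => starRingEnd ℂ (c j) * (fc n j * c (j - 1))),
    Nat.range_succ_eq_Icc_zero, ← Finset.insert_Icc_add_one_left_eq_Icc (Nat.zero_le n),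
    Finset.sum_insert (by simp), fc_zero, zero_add]
  simp only [Complex.ofReal_zero, zero_mul, mul_zero, zero_add]
  exact Finset.sum_congr rfl fun j _ => by ring

lemma star_dotProduct_Sm_mulVec (c : ℕ → ℂ) :
    star (fun j : Fin (n + 1) => c j) ⬝ᵥ (Sm n *ᵥ fun j : Fin (n + 1) => c j) =
      ∑ j ∈ Finset.Icc 1 n, (fc n j : ℂ) * (c j * starRingEnd ℂ (c (j - 1))) := by
  rw [Sm, star_dotProduct_conjTranspose_mulVec, star_dotProduct_Sp_mulVec, star_sum]
  simp [mul_comm]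

lemma A1_eq (c : ℕ → ℂ) (ψ : ℝ) :
    A1 n c ψ = (2 : ℂ)⁻¹ *
      (Complex.exp (I * ψ) *
          ∑ j ∈ Finset.Icc 1 n, (fc n j : ℂ) * (starRingEnd ℂ (c j) * c (j - 1)) +
        Complex.exp (-(I * ψ)) *
          ∑ j ∈ Finset.Icc 1 n, (fc n j : ℂ) * (c j * starRingEnd ℂ (c (j - 1)))) := by
  simp only [A1, Finset.mul_sum, ← Finset.sum_add_distrib]
  exact Finset.sum_congr rfl fun j _ => by ring

end Spin

theorem expectation_S3_general (n : ℕ) (c : ℕ → ℂ)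
    (φ θ ψ : ℝ) :
    star (Rot n φ θ ψ *ᵥ fun j : Fin (n+1) => c (j : ℕ)) ⬝ᵥ
        (S3 n *ᵥ (Rot n φ θ ψ *ᵥ fun j : Fin (n+1) => c (j : ℕ))) =
      ((A0 n c : ℝ) : ℂ) * ((Real.cos θ : ℝ) : ℂ) -
        A1 n c ψ * ((Real.sin θ : ℝ) : ℂ) := by
  rw [star_mulVec, ← dotProduct_mulVec, mulVec_mulVec, mulVec_mulVec, mul_assoc,
    conjTranspose_Rot_mul_S3_mul_Rot, ← Complex.coe_smul, ← Complex.coe_smul]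
  simp only [sub_mulVec, smul_mulVec, add_mulVec, dotProduct_sub, dotProduct_smul, dotProduct_add,
    star_dotProduct_S3_mulVec, star_dotProduct_Sp_mulVec, star_dotProduct_Sm_mulVec, smul_eq_mul]
  rw [A1_eq]
  ring

/-- Expectation value of `S₃` in the general coherent state `R(Ω)Ψ₀`:
`⟨R(Ω)Ψ₀, S₃ R(Ω)Ψ₀⟩ = A₀ cos θ - A₁(ψ) sin θ`. -/
theorem expectation_S3 (n : ℕ) (c : ℕ → ℂ)
    (hc : ∑ j ∈ Finset.range (n+1), ‖c j‖ ^ 2 = 1)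
    (φ θ ψ : ℝ) :
    star (Rot n φ θ ψ *ᵥ fun j : Fin (n+1) => c (j : ℕ)) ⬝ᵥ
        (S3 n *ᵥ (Rot n φ θ ψ *ᵥ fun j : Fin (n+1) => c (j : ℕ))) =
      ((A0 n c : ℝ) : ℂ) * ((Real.cos θ : ℝ) : ℂ) -
        A1 n c ψ * ((Real.sin θ : ℝ) : ℂ) :=
  expectation_S3_general n c φ θ ψ
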